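/- In the Yokonuma–Hecke algebra Y_{d,n}(u), for every fixed 1 ≤ j ≤ n−2, the two-sided ideal generated by the set {c_{i,i+1} : 1 ≤ i ≤ n−2} equals the two-sided ideal generated by the single element c_{j,j+1}. In particular, with γ := g_1 ⋯ g_{n−1}, one has γ^{i−1} c_{1,2} = c_{i,i+1} γ^{i−1} for all 1 ≤ i ≤ n−2. -/

import Mathlib

noncomputable section

open scoped BigOperators

/-- Index type for the generators of the Yokonuma–Hecke algebra `Y_{d,n}(u)`:
`Sum.inl i` encodes the braiding generator `g_{i+1}` and `Sum.inr j` the framing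
generator `t_{j+1}` (`0`-based encoding of the `1`-based generators). -/
abbrev YHIdx (n : ℕ) := Sum (Fin (n - 1)) (Fin n)

/-- The free `ℂ`-algebra on the generators `g_1, …, g_{n-1}, t_1, …, t_n`. -/
abbrev YHFree (n : ℕ) := FreeAlgebra ℂ (YHIdx n)

/-- The generator `g_i` (1-based) of the free algebra; junk value `0` out of range. -/
def gF (n i : ℕ) : YHFree n :=
  if h : 1 ≤ i ∧ i ≤ n - 1 then FreeAlgebra.ι ℂ (Sum.inl ⟨i - 1, by omega⟩) else 0

/-- The generator `t_j` (1-based) of the free algebra; junk value `0` out of range. -/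
def tF (n j : ℕ) : YHFree n :=
  if h : 1 ≤ j ∧ j ≤ n then FreeAlgebra.ι ℂ (Sum.inr ⟨j - 1, by omega⟩) else 0

/-- The element `e_i := (1/d) ∑_{s=0}^{d-1} t_i^s t_{i+1}^{d-s}` of the free algebra. -/
def eF (d n i : ℕ) : YHFree n :=
  (d : ℂ)⁻¹ • ∑ s ∈ Finset.range d, tF n i ^ s * tF n (i + 1) ^ (d - s)

/-- The defining relations of the Yokonuma–Hecke algebra `Y_{d,n}(u)`. -/
inductive YHRel (d n : ℕ) (u : ℂ) : YHFree n → YHFree n → Prop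
  | g_comm {i j : ℕ} (hi : 1 ≤ i) (hij : i + 1 < j) (hj : j ≤ n - 1) :
      YHRel d n u (gF n i * gF n j) (gF n j * gF n i)
  | braid {i : ℕ} (hi : 1 ≤ i) (hi' : i + 1 ≤ n - 1) :
      YHRel d n u (gF n i * gF n (i + 1) * gF n i)
        (gF n (i + 1) * gF n i * gF n (i + 1))
  | t_comm {i j : ℕ} (hi : 1 ≤ i) (hi' : i ≤ n) (hj : 1 ≤ j) (hj' : j ≤ n) :
      YHRel d n u (tF n i * tF n j) (tF n j * tF n i)
  | t_pow {i : ℕ} (hi : 1 ≤ i) (hi' : i ≤ n) : YHRel d n u (tF n i ^ d) 1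
  | g_t {i : ℕ} (hi : 1 ≤ i) (hi' : i ≤ n - 1) :
      YHRel d n u (gF n i * tF n i) (tF n (i + 1) * gF n i)
  | g_t' {i : ℕ} (hi : 1 ≤ i) (hi' : i ≤ n - 1) :
      YHRel d n u (gF n i * tF n (i + 1)) (tF n i * gF n i)
  | g_t_comm {i j : ℕ} (hi : 1 ≤ i) (hi' : i ≤ n - 1) (hj : 1 ≤ j) (hj' : j ≤ n)
      (h1 : j ≠ i) (h2 : j ≠ i + 1) :
      YHRel d n u (gF n i * tF n j) (tF n j * gF n i)
  | quad {i : ℕ} (hi : 1 ≤ i) (hi' : i ≤ n - 1) :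
      YHRel d n u (gF n i ^ 2)
        (1 + (u - 1) • eF d n i + (u - 1) • (eF d n i * gF n i))

/-- The Yokonuma–Hecke algebra `Y_{d,n}(u)`: the quotient of the free algebra on the
generators `g_1, …, g_{n-1}, t_1, …, t_n` by (the two-sided ideal generated by) the
defining relations. -/
abbrev YH (d n : ℕ) (u : ℂ) := RingQuot (YHRel d n u)

/-- The generator `g_i` of `Y_{d,n}(u)` (1-based). -/
def yg (d n : ℕ) (u : ℂ) (i : ℕ) : YH d n u :=
  RingQuot.mkAlgHom ℂ (YHRel d n u) (gF n i)

/-- The generator `t_j` of `Y_{d,n}(u)` (1-based). -/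
def yt (d n : ℕ) (u : ℂ) (j : ℕ) : YH d n u :=
  RingQuot.mkAlgHom ℂ (YHRel d n u) (tF n j)

/-- The idempotent `e_i = (1/d) ∑_{s=0}^{d-1} t_i^s t_{i+1}^{d-s}` in `Y_{d,n}(u)`. -/
def ye (d n : ℕ) (u : ℂ) (i : ℕ) : YH d n u :=
  (d : ℂ)⁻¹ • ∑ s ∈ Finset.range d, yt d n u i ^ s * yt d n u (i + 1) ^ (d - s)

/-- The element `e_{i,j} = (1/d) ∑_{s=0}^{d-1} t_i^s t_j^{d-s}` in `Y_{d,n}(u)`. -/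
def yeij (d n : ℕ) (u : ℂ) (i j : ℕ) : YH d n u :=
  (d : ℂ)⁻¹ • ∑ s ∈ Finset.range d, yt d n u i ^ s * yt d n u j ^ (d - s)

/-- The Steinberg-type element
`g_{i,i+1} = 1 + g_i + g_{i+1} + g_i g_{i+1} + g_{i+1} g_i + g_i g_{i+1} g_i`. -/
def ygSt (d n : ℕ) (u : ℂ) (i : ℕ) : YH d n u :=
  1 + yg d n u i + yg d n u (i + 1) + yg d n u i * yg d n u (i + 1)
    + yg d n u (i + 1) * yg d n u i + yg d n u i * yg d n u (i + 1) * yg d n u i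

/-- The element `r_{i,i+1} = e_i e_{i+1} g_{i,i+1}` of `Y_{d,n}(u)`. -/
def yr (d n : ℕ) (u : ℂ) (i : ℕ) : YH d n u :=
  ye d n u i * ye d n u (i + 1) * ygSt d n u i

/-- The element `c_{i,i+1} = (∑_{k=0}^{d-1} t_i^k) e_i e_{i+1} g_{i,i+1}` of `Y_{d,n}(u)`. -/
def yc (d n : ℕ) (u : ℂ) (i : ℕ) : YH d n u :=
  (∑ k ∈ Finset.range d, yt d n u i ^ k) *
    (ye d n u i * ye d n u (i + 1) * ygSt d n u i)


/-- The element `γ = g_1 g_2 ⋯ g_{n-1}` of `Y_{d,n}(u)`. -/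
def ygam (d n : ℕ) (u : ℂ) : YH d n u :=
  ((List.range (n - 1)).map fun k => yg d n u (k + 1)).prod

/-!
Conjugation by `γ = g_1 ⋯ g_{n-1}` shifts indices: `γ t_i = t_{i+1} γ`, and `γ g_i = g_{i+1} γ`
by the braid relation, hence `γ c_{i,i+1} = c_{i+1,i+2} γ`. Since `γ` is a unit, every
`c_{i,i+1}` is conjugate to `c_{1,2}`, so they all generate the same two-sided ideal.

`γ` is a unit because each `g_i` is: the quadratic relation gives the inverse once `e_i` is an
idempotent commuting with `g_i`. Idempotence holds because `e_i` is the average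
`(1/d) ∑_{s<d} x^s` of the powers of `x = t_i t_{i+1}^{d-1}`, which satisfies `x^d = 1`;
commutation because `g_i` swaps `t_i` and `t_{i+1}`, and `e_i` is symmetric in them.
-/

open Finset

theorem SemiconjBy.finset_sum_right {ι R : Type*} [NonUnitalNonAssocSemiring R] {x : R}
    {s : Finset ι} {f g : ι → R} (h : ∀ i ∈ s, SemiconjBy x (f i) (g i)) :
    SemiconjBy x (∑ i ∈ s, f i) (∑ i ∈ s, g i) := by
  unfold SemiconjBy
  rw [Finset.mul_sum, Finset.sum_mul]
  exact Finset.sum_congr rfl h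

theorem TwoSidedIdeal.mem_span_singleton_of_semiconjBy {R : Type*} [Ring R] {a : Rˣ} {x y : R}
    (h : SemiconjBy (a : R) x y) : y ∈ TwoSidedIdeal.span {x} := by
  rw [(Units.eq_mul_inv_iff_mul_eq a).mpr h.eq.symm]
  exact mul_mem_right _ _ _ (mul_mem_left _ _ _ (subset_span rfl))

section FramingIdempotent

variable {K A : Type*} [Field K] [Ring A] [Algebra K A]

theorem geom_sum_mul_geom_sum_of_pow_eq_one {x : A} {d : ℕ} (hx : x ^ d = 1) :
    (∑ s ∈ range d, x ^ s) * (∑ s ∈ range d, x ^ s) = d • ∑ s ∈ range d, x ^ s := by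
  set S := ∑ s ∈ range d, x ^ s
  have hSx : S * x = S := by
    have h := geom_sum_mul x d
    rwa [hx, sub_self, mul_sub, mul_one, sub_eq_zero] at h
  have hSpow : ∀ k, S * x ^ k = S := fun k => by
    induction k with
    | zero => rw [pow_zero, mul_one]
    | succ k ih => rw [pow_succ, ← mul_assoc, ih, hSx]
  rw [Finset.mul_sum, Finset.sum_congr rfl fun k _ => hSpow k, sum_const, card_range]

theorem Commute.pow_mul_pow_sub_eq_pow {a b : A} {d : ℕ} (hab : Commute a b) (hb : b ^ d = 1)
    {s : ℕ} (hs : s ≤ d) : a ^ s * b ^ (d - s) = (a * b ^ (d - 1)) ^ s := by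
  induction s with
  | zero => rw [pow_zero, pow_zero, one_mul, Nat.sub_zero, hb]
  | succ s ih =>
    rw [pow_succ' (a * b ^ (d - 1)), ← ih (by omega)]
    calc a ^ (s + 1) * b ^ (d - (s + 1)) = a * (a ^ s * (b ^ (d - 1) * b ^ (d - s))) := by
          rw [← pow_add, show d - 1 + (d - s) = d - (s + 1) + d by omega, pow_add b, hb, mul_one,
            pow_succ', mul_assoc]
      _ = a * b ^ (d - 1) * (a ^ s * b ^ (d - s)) := by
          rw [← mul_assoc (a ^ s), (hab.pow_pow s (d - 1)).eq, mul_assoc, mul_assoc]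

def framingIdem (K : Type*) [Field K] [Algebra K A] (d : ℕ) (a b : A) : A :=
  (d : K)⁻¹ • ∑ s ∈ range d, a ^ s * b ^ (d - s)

theorem isIdempotentElem_framingIdem {a b : A} {d : ℕ} (hab : Commute a b) (ha : a ^ d = 1)
    (hb : b ^ d = 1) : IsIdempotentElem (framingIdem K d a b) := by
  have hgeom : ∑ s ∈ range d, a ^ s * b ^ (d - s) = ∑ s ∈ range d, (a * b ^ (d - 1)) ^ s :=
    Finset.sum_congr rfl fun s hs => hab.pow_mul_pow_sub_eq_pow hb (mem_range.mp hs).le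
  have hx : (a * b ^ (d - 1)) ^ d = 1 := by
    rw [← hab.pow_mul_pow_sub_eq_pow hb le_rfl, Nat.sub_self, pow_zero, mul_one, ha]
  unfold IsIdempotentElem framingIdem
  rw [hgeom, smul_mul_smul_comm, geom_sum_mul_geom_sum_of_pow_eq_one hx,
    ← Nat.cast_smul_eq_nsmul K, smul_smul]
  congr 1
  simpa using mul_self_mul_inv ((d : K)⁻¹)

theorem framingIdem_comm {a b : A} {d : ℕ} (hab : Commute a b) (ha : a ^ d = 1)
    (hb : b ^ d = 1) : framingIdem K d a b = framingIdem K d b a := by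
  unfold framingIdem
  congr 1
  have hshift := (sum_range_succ' (fun s => b ^ s * a ^ (d - s)) d).symm.trans
    (sum_range_succ (fun s => b ^ s * a ^ (d - s)) d)
  simp only [pow_zero, Nat.sub_zero, Nat.sub_self, mul_one, ha, hb] at hshift
  rw [← add_right_cancel hshift, ← sum_range_reflect]
  refine Finset.sum_congr rfl fun s hs => ?_
  have hs := mem_range.mp hs
  rw [(hab.pow_pow _ _).eq, show d - (d - 1 - s) = s + 1 by omega,
    show d - 1 - s = d - (s + 1) by omega]

theorem SemiconjBy.framingIdem {g a b a' b' : A} (d : ℕ) (ha : SemiconjBy g a a')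
    (hb : SemiconjBy g b b') : SemiconjBy g (framingIdem K d a b) (framingIdem K d a' b') :=
  (SemiconjBy.finset_sum_right fun s _ =>
    (ha.pow_right s).mul_right (hb.pow_right (d - s))).smul_right _

theorem isUnit_of_sq_eq_one_add_smul {u : K} (hu : u ≠ 0) {g e : A} (he : IsIdempotentElem e)
    (hge : Commute g e) (hsq : g ^ 2 = 1 + (u - 1) • e + (u - 1) • (e * g)) : IsUnit g := by
  set h := g + (u⁻¹ - 1) • e + (u⁻¹ - 1) • (e * g)
  have heg2 : e * g ^ 2 = u • e + (u - 1) • (e * g) := by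
    rw [hsq, mul_add, mul_add, mul_one, mul_smul_comm, mul_smul_comm, he.eq, ← mul_assoc, he.eq]
    match_scalars <;> ring
  have hgh : g * h = 1 := by
    calc g * h = g ^ 2 + (u⁻¹ - 1) • (e * g) + (u⁻¹ - 1) • (e * g ^ 2) := by
          rw [mul_add, mul_add, mul_smul_comm, mul_smul_comm, hge.eq, ← mul_assoc, hge.eq,
            mul_assoc, sq]
      _ = 1 := by
          rw [heg2, hsq]
          match_scalars
          · ring
          · field_simp; ring
          · field_simp; ring
  have hhg : Commute h g :=
    ((Commute.refl g).add_left (hge.symm.smul_left _)).add_left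
      ((hge.symm.mul_left (Commute.refl g)).smul_left _)
  exact ⟨⟨g, h, hgh, hhg.eq.trans hgh⟩, rfl⟩

end FramingIdempotent

namespace YokonumaHecke

section Relations

variable {d n : ℕ} {u : ℂ}

theorem commute_yt_yt {i j : ℕ} (hi : 1 ≤ i) (hi' : i ≤ n) (hj : 1 ≤ j) (hj' : j ≤ n) :
    Commute (yt d n u i) (yt d n u j) := by
  simpa only [Commute, SemiconjBy, yt, map_mul] using
    RingQuot.mkAlgHom_rel ℂ (YHRel.t_comm (d := d) (u := u) hi hi' hj hj')

theorem yt_pow_eq_one {i : ℕ} (hi : 1 ≤ i) (hi' : i ≤ n) : yt d n u i ^ d = 1 := by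
  simpa only [yt, map_pow, map_one] using
    RingQuot.mkAlgHom_rel ℂ (YHRel.t_pow (d := d) (u := u) hi hi')

theorem semiconjBy_yg_yt_self {i : ℕ} (hi : 1 ≤ i) (hi' : i ≤ n - 1) :
    SemiconjBy (yg d n u i) (yt d n u i) (yt d n u (i + 1)) := by
  simpa only [SemiconjBy, yg, yt, map_mul] using
    RingQuot.mkAlgHom_rel ℂ (YHRel.g_t (d := d) (u := u) hi hi')

theorem semiconjBy_yg_yt_succ {i : ℕ} (hi : 1 ≤ i) (hi' : i ≤ n - 1) :
    SemiconjBy (yg d n u i) (yt d n u (i + 1)) (yt d n u i) := by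
  simpa only [SemiconjBy, yg, yt, map_mul] using
    RingQuot.mkAlgHom_rel ℂ (YHRel.g_t' (d := d) (u := u) hi hi')

theorem commute_yg_yt {i j : ℕ} (hi : 1 ≤ i) (hi' : i ≤ n - 1) (hj : 1 ≤ j) (hj' : j ≤ n)
    (h₁ : j ≠ i) (h₂ : j ≠ i + 1) : Commute (yg d n u i) (yt d n u j) := by
  simpa only [Commute, SemiconjBy, yg, yt, map_mul] using
    RingQuot.mkAlgHom_rel ℂ (YHRel.g_t_comm (d := d) (u := u) hi hi' hj hj' h₁ h₂)

theorem commute_yg_yg {i j : ℕ} (hi : 1 ≤ i) (hij : i + 1 < j) (hj : j ≤ n - 1) :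
    Commute (yg d n u i) (yg d n u j) := by
  simpa only [Commute, SemiconjBy, yg, map_mul] using
    RingQuot.mkAlgHom_rel ℂ (YHRel.g_comm (d := d) (u := u) hi hij hj)

theorem semiconjBy_yg_mul_yg_succ {i : ℕ} (hi : 1 ≤ i) (hi' : i + 1 ≤ n - 1) :
    SemiconjBy (yg d n u i * yg d n u (i + 1)) (yg d n u i) (yg d n u (i + 1)) := by
  simpa only [SemiconjBy, yg, map_mul, mul_assoc] using
    RingQuot.mkAlgHom_rel ℂ (YHRel.braid (d := d) (u := u) hi hi')

theorem ye_eq_framingIdem (i : ℕ) :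
    ye d n u i = framingIdem ℂ d (yt d n u i) (yt d n u (i + 1)) :=
  rfl

theorem yg_sq {i : ℕ} (hi : 1 ≤ i) (hi' : i ≤ n - 1) :
    yg d n u i ^ 2 = 1 + (u - 1) • ye d n u i + (u - 1) • (ye d n u i * yg d n u i) := by
  simpa only [yg, ye, yt, eF, map_pow, map_add, map_one, map_smul, map_mul, map_sum] using
    RingQuot.mkAlgHom_rel ℂ (YHRel.quad (d := d) (u := u) hi hi')

theorem isUnit_yg (hu : u ≠ 0) {i : ℕ} (hi : 1 ≤ i) (hi' : i ≤ n - 1) :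
    IsUnit (yg d n u i) := by
  have hcomm : Commute (yt d n u i) (yt d n u (i + 1)) :=
    commute_yt_yt hi (by omega) (by omega) (by omega)
  have hpow : yt d n u i ^ d = 1 := yt_pow_eq_one hi (by omega)
  have hpow' : yt d n u (i + 1) ^ d = 1 := yt_pow_eq_one (by omega) (by omega)
  have he : IsIdempotentElem (ye d n u i) := by
    rw [ye_eq_framingIdem]
    exact isIdempotentElem_framingIdem hcomm hpow hpow'
  have hge : Commute (yg d n u i) (ye d n u i) := by
    have h : SemiconjBy (yg d n u i) (framingIdem ℂ d (yt d n u i) (yt d n u (i + 1)))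
        (framingIdem ℂ d (yt d n u (i + 1)) (yt d n u i)) :=
      (semiconjBy_yg_yt_self hi hi').framingIdem d (semiconjBy_yg_yt_succ hi hi')
    rwa [← framingIdem_comm hcomm hpow hpow', ← ye_eq_framingIdem] at h
  exact isUnit_of_sq_eq_one_add_smul hu he hge (yg_sq hi hi')

end Relations

section Gamma

variable {d n : ℕ} {u : ℂ}

/-- `g_a g_{a+1} ⋯ g_{a+m-1}`. -/
def gprod (d n : ℕ) (u : ℂ) (a m : ℕ) : YH d n u := ((List.range' a m).map (yg d n u)).prod

theorem ygam_eq_gprod : ygam d n u = gprod d n u 1 (n - 1) := by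
  rw [ygam, gprod, List.range'_eq_map_range, List.map_map]
  congr 2
  ext k
  simp [Nat.add_comm]

theorem gprod_add (a m k : ℕ) :
    gprod d n u a (m + k) = gprod d n u a m * gprod d n u (a + m) k := by
  rw [gprod, gprod, gprod, ← List.prod_append, ← List.map_append, List.range'_append_1]

theorem gprod_succ (a m : ℕ) : gprod d n u a (m + 1) = yg d n u a * gprod d n u (a + 1) m := by
  rw [gprod, gprod, List.range'_succ, List.map_cons, List.prod_cons]

theorem commute_gprod_yt {a m j : ℕ} (ha : 1 ≤ a) (hm : a + m ≤ n) (hj : 1 ≤ j)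
    (hj' : j ≤ n) (h : j < a ∨ a + m < j) : Commute (gprod d n u a m) (yt d n u j) := by
  refine Commute.list_prod_left _ _ fun x hx => ?_
  obtain ⟨k, hk, rfl⟩ := List.mem_map.mp hx
  rw [List.mem_range'_1] at hk
  exact commute_yg_yt (by omega) (by omega) hj hj' (by omega) (by omega)

theorem commute_gprod_yg {a m i : ℕ} (ha : 1 ≤ a) (hm : a + m ≤ n) (hi : 1 ≤ i)
    (hi' : i ≤ n - 1) (h : i + 1 < a ∨ a + m < i) : Commute (gprod d n u a m) (yg d n u i) := by
  refine Commute.list_prod_left _ _ fun x hx => ?_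
  obtain ⟨k, hk, rfl⟩ := List.mem_map.mp hx
  rw [List.mem_range'_1] at hk
  rcases h with h | h
  · exact (commute_yg_yg hi (by omega) (by omega)).symm
  · exact commute_yg_yg (by omega) (by omega) hi'

theorem ygam_eq_gprod_mul_yg_mul_gprod {i : ℕ} (hi : 1 ≤ i) (hi' : i + 1 ≤ n) :
    ygam d n u = gprod d n u 1 (i - 1) * (yg d n u i * gprod d n u (i + 1) (n - 1 - i)) := by
  rw [ygam_eq_gprod, show n - 1 = i - 1 + (n - 1 - i + 1) by omega, gprod_add, gprod_succ,
    show 1 + (i - 1) = i by omega, show i - 1 + (n - 1 - i + 1) - i = n - 1 - i by omega]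

theorem semiconjBy_ygam_yt {i : ℕ} (hi : 1 ≤ i) (hi' : i + 1 ≤ n) :
    SemiconjBy (ygam d n u) (yt d n u i) (yt d n u (i + 1)) := by
  rw [ygam_eq_gprod_mul_yg_mul_gprod hi hi']
  exact SemiconjBy.mul_left (commute_gprod_yt le_rfl (by omega) (by omega) hi' (by omega))
    ((semiconjBy_yg_yt_self hi (by omega)).mul_left
      (commute_gprod_yt (by omega) (by omega) hi (by omega) (by omega)))

theorem semiconjBy_ygam_yg {i : ℕ} (hi : 1 ≤ i) (hi' : i + 2 ≤ n) :
    SemiconjBy (ygam d n u) (yg d n u i) (yg d n u (i + 1)) := by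
  rw [ygam_eq_gprod_mul_yg_mul_gprod hi (by omega), show n - 1 - i = n - 2 - i + 1 by omega,
    gprod_succ, ← mul_assoc (yg d n u i)]
  exact SemiconjBy.mul_left
    (commute_gprod_yg le_rfl (by omega) (by omega) (by omega) (by omega))
    ((semiconjBy_yg_mul_yg_succ hi (by omega)).mul_left
      (commute_gprod_yg (by omega) (by omega) hi (by omega) (by omega)))

theorem isUnit_ygam (hu : u ≠ 0) : IsUnit (ygam d n u) :=
  List.prod_isUnit fun _ hx => by
    obtain ⟨k, hk, rfl⟩ := List.mem_map.mp hx
    exact isUnit_yg hu (by omega) (by rw [List.mem_range] at hk; omega)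

end Gamma

section Conjugation

variable {d n : ℕ} {u : ℂ}

theorem semiconjBy_ygam_ye {i : ℕ} (hi : 1 ≤ i) (hi' : i + 2 ≤ n) :
    SemiconjBy (ygam d n u) (ye d n u i) (ye d n u (i + 1)) := by
  rw [ye_eq_framingIdem, ye_eq_framingIdem]
  exact (semiconjBy_ygam_yt hi (by omega)).framingIdem d (semiconjBy_ygam_yt (by omega) hi')

theorem semiconjBy_ygam_ygSt {i : ℕ} (hi : 1 ≤ i) (hi' : i + 3 ≤ n) :
    SemiconjBy (ygam d n u) (ygSt d n u i) (ygSt d n u (i + 1)) := by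
  have h₁ : SemiconjBy (ygam d n u) (yg d n u i) (yg d n u (i + 1)) :=
    semiconjBy_ygam_yg hi (by omega)
  have h₂ : SemiconjBy (ygam d n u) (yg d n u (i + 1)) (yg d n u (i + 1 + 1)) :=
    semiconjBy_ygam_yg (by omega) (by omega)
  exact (((((SemiconjBy.one_right _).add_right h₁).add_right h₂).add_right
    (h₁.mul_right h₂)).add_right (h₂.mul_right h₁)).add_right
      ((h₁.mul_right h₂).mul_right h₁)

theorem semiconjBy_ygam_yc {i : ℕ} (hi : 1 ≤ i) (hi' : i + 3 ≤ n) :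
    SemiconjBy (ygam d n u) (yc d n u i) (yc d n u (i + 1)) :=
  (SemiconjBy.finset_sum_right fun k _ =>
    (semiconjBy_ygam_yt hi (by omega)).pow_right k).mul_right
      (((semiconjBy_ygam_ye hi (by omega)).mul_right
        (semiconjBy_ygam_ye (by omega) (by omega))).mul_right (semiconjBy_ygam_ygSt hi hi'))

theorem semiconjBy_ygam_pow_yc_one {i : ℕ} (hi : 1 ≤ i) (hi' : i + 2 ≤ n) :
    SemiconjBy (ygam d n u ^ (i - 1)) (yc d n u 1) (yc d n u i) := by
  obtain ⟨k, rfl⟩ : ∃ k, i = k + 1 := ⟨i - 1, by omega⟩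
  rw [Nat.add_sub_cancel]
  induction k with
  | zero => simp
  | succ k ih =>
    rw [pow_succ']
    exact (semiconjBy_ygam_yc (by omega) hi').mul_left (ih (by omega) (by omega))

theorem yc_mem_span_yc (hu : u ≠ 0) {i j : ℕ} (hi : 1 ≤ i) (hi' : i + 2 ≤ n) (hj : 1 ≤ j)
    (hj' : j + 2 ≤ n) : yc d n u i ∈ TwoSidedIdeal.span {yc d n u j} := by
  obtain ⟨γ, hγ⟩ := isUnit_ygam (d := d) (n := n) hu
  have hconj : ∀ k, 1 ≤ k → k + 2 ≤ n →
      SemiconjBy (↑(γ ^ (k - 1))) (yc d n u 1) (yc d n u k) := fun k hk hk' => by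
    rw [Units.val_pow_eq_pow_val, hγ]
    exact semiconjBy_ygam_pow_yc_one hk hk'
  have h₁ : yc d n u 1 ∈ TwoSidedIdeal.span {yc d n u j} :=
    TwoSidedIdeal.mem_span_singleton_of_semiconjBy (hconj j hj hj').units_inv_symm_left
  exact TwoSidedIdeal.span_le.mpr (Set.singleton_subset_iff.mpr h₁)
    (TwoSidedIdeal.mem_span_singleton_of_semiconjBy (hconj i hi hi'))

end Conjugation

end YokonumaHecke

theorem stmt5_general (d n : ℕ) (u : ℂ) (hu : u ≠ 0) :
    (∀ j : ℕ, 1 ≤ j → j ≤ n - 2 →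
      TwoSidedIdeal.span {a : YH d n u | ∃ i : ℕ, 1 ≤ i ∧ i ≤ n - 2 ∧ a = yc d n u i} =
        TwoSidedIdeal.span {yc d n u j}) ∧
    (∀ i : ℕ, 1 ≤ i → i ≤ n - 2 →
      ygam d n u ^ (i - 1) * yc d n u 1 = yc d n u i * ygam d n u ^ (i - 1)) := by
  refine ⟨fun j hj hj' => le_antisymm ?_ ?_, fun i hi hi' => ?_⟩
  · refine TwoSidedIdeal.span_le.mpr ?_
    rintro _ ⟨i, hi, hi', rfl⟩
    exact YokonumaHecke.yc_mem_span_yc hu hi (by omega) hj (by omega)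
  · exact TwoSidedIdeal.span_mono (Set.singleton_subset_iff.mpr ⟨j, hj, hj', rfl⟩)
  · exact (YokonumaHecke.semiconjBy_ygam_pow_yc_one hi (by omega)).eq

/-- In `Y_{d,n}(u)`, for each fixed `1 ≤ j ≤ n-2`, the two-sided ideal
generated by `{c_{i,i+1} : 1 ≤ i ≤ n-2}` equals the two-sided ideal generated by the
single element `c_{j,j+1}`; moreover `γ^{i-1} c_{1,2} = c_{i,i+1} γ^{i-1}` for all
`1 ≤ i ≤ n-2`, where `γ = g_1 ⋯ g_{n-1}`. -/
theorem stmt5 (d n : ℕ) (hd : 1 ≤ d) (hn : 3 ≤ n) (u : ℂ) (hu : u ≠ 0) :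
    (∀ j : ℕ, 1 ≤ j → j ≤ n - 2 →
      TwoSidedIdeal.span {a : YH d n u | ∃ i : ℕ, 1 ≤ i ∧ i ≤ n - 2 ∧ a = yc d n u i} =
        TwoSidedIdeal.span {yc d n u j}) ∧
    (∀ i : ℕ, 1 ≤ i → i ≤ n - 2 →
      ygam d n u ^ (i - 1) * yc d n u 1 = yc d n u i * ygam d n u ^ (i - 1)) :=
  stmt5_general d n u hu
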